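/- arXiv:1801.02262 — 2 statements merged into one kernel-verified Lean document; each statement's English description precedes it below -/
import Mathlib

section
/- For n ≥ 3, if the center of a magic n-gon were c = 2n+1 (so the magic sum would be m = 4n + 2), then the diagonal containing the value 1 would force two distinct values from {2, ..., 2n-1} to sum to 4n+1, which is impossible since their maximum sum is 4n - 3. Hence c ≠ 2n+1. -/
/-!
Summing the side equations gives `2 V + M = n s`, where `V` and `M` are the sums of the vertex
and midpoint labels. Summing the diagonal equations gives `V + n c + M = n s` for odd `n`, and
`2 V + n c = n s = 2 M + n c` for even `n`; either way `V = n c`. Since the labels are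
`1, …, 2n+1`, also `V + M + c = (n+1)(2n+1)`, hence `M = (n+1)(2n+1-c)`. As `M > 0`, the
center is at most `2n`.
-/

/-- A magic `n`-gon: values `v i` at vertices, `m i` at the midpoint of the side
between `v i` and `v (i+1)`, and `c` at the center, all drawn injectively from
`{1, ..., 2n+1}`, such that every side sums to `s` and every diagonal (through
the center) sums to `s`.  For even `n` the diagonals join opposite vertices and
opposite midpoints; for odd `n` they join each vertex to the opposite midpoint. -/
def IsMagicNGon (n : ℕ) [NeZero n] (v m : ZMod n → ℕ) (c s : ℕ) : Prop :=
  Function.Injective (Sum.elim v (Sum.elim m (fun _ : Unit => c))) ∧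
  (∀ i, v i ∈ Finset.Icc 1 (2 * n + 1)) ∧
  (∀ i, m i ∈ Finset.Icc 1 (2 * n + 1)) ∧
  c ∈ Finset.Icc 1 (2 * n + 1) ∧
  (∀ i, v i + m i + v (i + 1) = s) ∧
  (if n % 2 = 0
    then ∀ i, v i + c + v (i + (n / 2 : ℕ)) = s ∧ m i + c + m (i + (n / 2 : ℕ)) = s
    else ∀ i, v i + c + m (i + (n / 2 : ℕ)) = s)

open Finset

theorem Finset.sum_Icc_one_id_mul_two (N : ℕ) : (∑ x ∈ Icc 1 N, x) * 2 = N * (N + 1) := by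
  induction N with
  | zero => simp
  | succ N ih =>
    rw [sum_Icc_succ_top (by omega), add_mul, ih]
    ring

theorem Finset.sum_comp_eq_sum_of_injective {ι β M : Type*} [Fintype ι] [DecidableEq β]
    [AddCommMonoid M] {f : ι → β} {t : Finset β} (hf : Function.Injective f)
    (hmaps : ∀ i, f i ∈ t) (hcard : #t ≤ Fintype.card ι) (g : β → M) :
    ∑ i, g (f i) = ∑ x ∈ t, g x := by
  have himage : univ.image f = t :=
    eq_of_subset_of_card_le (fun x hx => by obtain ⟨i, -, rfl⟩ := mem_image.mp hx; exact hmaps i)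
      (by rwa [card_image_of_injective _ hf, card_univ])
  rw [← himage, sum_image fun i _ j _ hij => hf hij]

namespace IsMagicNGon

variable {n : ℕ} [NeZero n] {v m : ZMod n → ℕ} {c s : ℕ}

private theorem sum_comp_add_right (g : ZMod n → ℕ) (k : ZMod n) : ∑ i, g (i + k) = ∑ i, g i :=
  Equiv.sum_comp (Equiv.addRight k) g

private theorem sum_const_eq_mul (t : ℕ) : ∑ _i : ZMod n, t = n * t := by
  rw [Finset.sum_const, card_univ, ZMod.card, smul_eq_mul]

theorem sum_vertex_add_sum_midpoint_add_center (h : IsMagicNGon n v m c s) :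
    ∑ i, v i + ∑ i, m i + c = (n + 1) * (2 * n + 1) := by
  obtain ⟨hinj, hv, hm, hc, -⟩ := h
  have hlabels := sum_comp_eq_sum_of_injective hinj
    (fun | .inl i => hv i | .inr (.inl i) => hm i | .inr (.inr _) => hc)
    (by simp [ZMod.card]; omega) id
  have hgauss := sum_Icc_one_id_mul_two (2 * n + 1)
  simp only [Fintype.sum_sum_type, Sum.elim_inl, Sum.elim_inr, id, Finset.univ_unique,
    sum_singleton] at hlabels
  nlinarith

theorem two_mul_sum_vertex_add_sum_midpoint (h : IsMagicNGon n v m c s) :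
    2 * ∑ i, v i + ∑ i, m i = n * s := by
  have := Fintype.sum_congr _ _ h.2.2.2.2.1
  rw [sum_add_distrib, sum_add_distrib, sum_comp_add_right v 1, sum_const_eq_mul] at this
  omega

theorem sum_vertex (h : IsMagicNGon n v m c s) : ∑ i, v i = n * c := by
  have hsides := h.two_mul_sum_vertex_add_sum_midpoint
  have hdiag := h.2.2.2.2.2
  split_ifs at hdiag
  · have hv := Fintype.sum_congr _ _ fun i => (hdiag i).1
    have hm := Fintype.sum_congr _ _ fun i => (hdiag i).2
    rw [sum_add_distrib, sum_add_distrib, sum_comp_add_right, sum_const_eq_mul,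
      sum_const_eq_mul] at hv hm
    omega
  · have hd := Fintype.sum_congr _ _ hdiag
    rw [sum_add_distrib, sum_add_distrib, sum_comp_add_right, sum_const_eq_mul,
      sum_const_eq_mul] at hd
    omega

theorem center_lt (h : IsMagicNGon n v m c s) : c < 2 * n + 1 := by
  have htotal := h.sum_vertex_add_sum_midpoint_add_center
  have hmid : 0 < ∑ i, m i :=
    Nat.lt_of_lt_of_le (mem_Icc.mp (h.2.2.1 0)).1
      (single_le_sum (fun _ _ => Nat.zero_le _) (mem_univ 0))
  rw [h.sum_vertex] at htotal
  have : (n + 1) * c < (n + 1) * (2 * n + 1) := by linarith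
  exact Nat.lt_of_mul_lt_mul_left this

end IsMagicNGon

theorem center_ne_top_general (n : ℕ) [NeZero n] :
    (∀ a b : ℕ, a ∈ Finset.Icc 2 (2 * n - 1) → b ∈ Finset.Icc 2 (2 * n - 1) → a ≠ b →
      a + b ≤ 4 * n - 3 ∧ a + b ≠ 4 * n + 1) ∧
    (∀ (v m : ZMod n → ℕ) (c s : ℕ), IsMagicNGon n v m c s → c ≠ 2 * n + 1) := by
  refine ⟨fun a b ha hb hab => ?_, fun v m c s h => h.center_lt.ne⟩
  rw [mem_Icc] at ha hb
  omega

theorem center_ne_top (n : ℕ) [NeZero n] (hn : 3 ≤ n) :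
    (∀ a b : ℕ, a ∈ Finset.Icc 2 (2 * n - 1) → b ∈ Finset.Icc 2 (2 * n - 1) → a ≠ b →
      a + b ≤ 4 * n - 3 ∧ a + b ≠ 4 * n + 1) ∧
    (∀ (v m : ZMod n → ℕ) (c s : ℕ), IsMagicNGon n v m c s → c ≠ 2 * n + 1) :=
  center_ne_top_general n
end

section
/- For even n ≥ 8, the explicitly defined labeling f* is injective, with image exactly {1, 2, ..., 2n+1}. -/
/-- The construction map on the first `n/2` vertices. -/
def fval (n i : ℕ) : ℕ :=
  if i = 1 then n - 1
  else if i = 2 then 2 * n + 1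
  else if i % 2 = 0 then n + i
  else i - 1

/-- The extended vertex labeling `f*` on all vertices `1 ≤ i ≤ n`. -/
def fv (n i : ℕ) : ℕ :=
  if i ≤ n / 2 then fval n i else 2 * n + 2 - fval n (i - n / 2)

/-- The midpoint labeling `f*(m_i) = 3n+3 - f*(v_i) - f*(v_{i+1})`, with `v_{n+1} = v_1`. -/
def fm (n i : ℕ) : ℕ :=
  3 * n + 3 - fv n i - fv n (if i = n then 1 else i + 1)

/-!
Write `h = n / 2`. Two consecutive vertices `v_i, v_{i+1}` with `3 ≤ i < h` carry one label
`i - 1` or `i` and one label `n + i + 1` or `n + i`, summing to `n + 2i`; so the midpoints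
`m_3, …, m_{h-1}` take the odd labels `2n + 3 - 2i`, and their antipodes `m_{h+i}` (where the vertex
labels are reflected by `x ↦ 2n + 2 - x`) take the odd labels `2i - 1`. Together with the vertex
labels (all even except four) and the few labels near the special vertices `v_1, v_2, v_h` and
their antipodes, this accounts for every number in `[1, 2n + 1]`. Since there are exactly
`2n + 1` nodes, a labeling that hits all of them is a bijection onto them.
-/

open Finset

theorem Function.injective_and_range_eq_of_subset_range {α β : Type*} [Fintype α]
    [DecidableEq β] {f : α → β} {s : Finset β} (hcard : #s = Fintype.card α)
    (hs : ↑s ⊆ Set.range f) : Function.Injective f ∧ Set.range f = s := by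
  have himage : univ.image f = s := by
    refine (eq_of_subset_of_card_le (fun b hb => ?_) ?_).symm
    · obtain ⟨a, rfl⟩ := hs hb
      exact mem_image_of_mem f (mem_univ a)
    · exact hcard ▸ card_image_le
  refine ⟨?_, by rw [← himage, coe_image, coe_univ, Set.image_univ]⟩
  have hinj : Set.InjOn f (univ : Finset α) :=
    card_image_iff.mp (by rw [himage, hcard, card_univ])
  rwa [coe_univ, Set.injOn_univ] at hinj

section Labels

variable {n i : ℕ}

theorem fval_one : fval n 1 = n - 1 := rfl

theorem fval_two : fval n 2 = 2 * n + 1 := rfl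

theorem fval_of_even (hi : i % 2 = 0) (hi2 : i ≠ 2) : fval n i = n + i := by
  unfold fval; split_ifs <;> omega

theorem fval_of_odd (hi : i % 2 = 1) (hi1 : i ≠ 1) : fval n i = i - 1 := by
  unfold fval; split_ifs <;> omega

theorem fval_le (hi : i ≤ n) : fval n i ≤ 2 * n + 1 := by
  unfold fval; split_ifs <;> omega

theorem fval_add_fval_succ (hi : 3 ≤ i) : fval n i + fval n (i + 1) = n + 2 * i := by
  rcases Nat.mod_two_eq_zero_or_one i with hpar | hpar
  · rw [fval_of_even hpar (by omega), fval_of_odd (by omega) (by omega)]; omega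
  · rw [fval_of_odd hpar (by omega), fval_of_even (by omega) (by omega)]; omega

theorem fv_of_le_half (hi : i ≤ n / 2) : fv n i = fval n i := if_pos hi

theorem fv_half_add (hi : 1 ≤ i) : fv n (n / 2 + i) = 2 * n + 2 - fval n i := by
  rw [fv, if_neg (by omega), Nat.add_sub_cancel_left]

theorem fm_of_lt (hi : i < n) : fm n i = 3 * n + 3 - fv n i - fv n (i + 1) := by
  rw [fm, if_neg hi.ne]

theorem fm_one (hn : 4 ≤ n) : fm n 1 = 3 := by
  rw [fm_of_lt (by omega), fv_of_le_half (by omega), fv_of_le_half (by omega), fval_one, fval_two]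
  omega

theorem fm_two (hn : 6 ≤ n) : fm n 2 = n := by
  rw [fm_of_lt (by omega), fv_of_le_half (by omega), fv_of_le_half (by omega), fval_two,
    fval_of_odd (by norm_num) (by norm_num)]
  omega

theorem fm_eq_of_lt_half (h3 : 3 ≤ i) (hi : i < n / 2) : fm n i = 2 * n + 3 - 2 * i := by
  rw [fm_of_lt (by omega), fv_of_le_half (by omega), fv_of_le_half (by omega)]
  have := fval_add_fval_succ (n := n) h3
  omega

theorem fm_half (hn : 2 ≤ n) : fm n (n / 2) = 2 * n - fval n (n / 2) := by
  rw [fm_of_lt (by omega), fv_of_le_half le_rfl, fv_half_add le_rfl, fval_one]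
  omega

theorem fm_half_add_one (hn : 4 ≤ n) : fm n (n / 2 + 1) = 2 * n - 1 := by
  rw [fm_of_lt (by omega), add_assoc, fv_half_add le_rfl, fv_half_add (i := 2) (by norm_num),
    fval_one, fval_two]
  omega

theorem fm_half_add_two (hn : 6 ≤ n) : fm n (n / 2 + 2) = n + 2 := by
  rw [fm_of_lt (by omega), add_assoc, fv_half_add (by norm_num), fv_half_add (i := 3) (by norm_num),
    fval_two, fval_of_odd (by norm_num) (by norm_num)]
  omega

theorem fm_half_add_of_lt_half (h3 : 3 ≤ i) (hi : i < n / 2) : fm n (n / 2 + i) = 2 * i - 1 := by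
  rw [fm_of_lt (by omega), fv_half_add (by omega), add_assoc, fv_half_add (by omega)]
  have := fval_add_fval_succ (n := n) h3
  omega

theorem fm_self (hev : n % 2 = 0) (hn : 2 ≤ n) : fm n n = fval n (n / 2) + 2 := by
  have hlast : fv n n = 2 * n + 2 - fval n (n / 2) := by
    rw [← fv_half_add (by omega)]; congr 1; omega
  have := fval_le (n := n) (i := n / 2) (by omega)
  rw [fm, if_pos rfl, hlast, fv_of_le_half (by omega), fval_one]
  omega

end Labels

def IsLabel (n m : ℕ) : Prop :=
  m = n + 1 ∨ ∃ i, 1 ≤ i ∧ i ≤ n ∧ (fv n i = m ∨ fm n i = m)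

namespace IsLabel

variable {n m : ℕ}

theorem center : IsLabel n (n + 1) := .inl rfl

theorem vertex (i : ℕ) (h1 : 1 ≤ i) (hn : i ≤ n) (h : fv n i = m) : IsLabel n m :=
  .inr ⟨i, h1, hn, .inl h⟩

theorem midpoint (i : ℕ) (h1 : 1 ≤ i) (hn : i ≤ n) (h : fm n i = m) : IsLabel n m :=
  .inr ⟨i, h1, hn, .inr h⟩

theorem of_odd (hev : n % 2 = 0) (hn : 8 ≤ n) (hm : m % 2 = 1) (hm' : m ≤ 2 * n + 1) :
    IsLabel n m := by
  obtain rfl | rfl | hlow | rfl | rfl | rfl | hhigh | rfl | rfl :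
      m = 1 ∨ m = 3 ∨ (5 ≤ m ∧ m ≤ n - 3) ∨ m = n - 1 ∨ m = n + 1 ∨ m = n + 3 ∨
      (n + 5 ≤ m ∧ m ≤ 2 * n - 3) ∨ m = 2 * n - 1 ∨ m = 2 * n + 1 := by omega
  · exact vertex (n / 2 + 2) (by omega) (by omega)
      (by rw [fv_half_add (by norm_num), fval_two]; omega)
  · exact midpoint 1 le_rfl (by omega) (fm_one (by omega))
  · exact midpoint (n / 2 + (m + 1) / 2) (by omega) (by omega)
      (by rw [fm_half_add_of_lt_half (by omega) (by omega)]; omega)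
  · exact vertex 1 le_rfl (by omega) (by rw [fv_of_le_half (by omega), fval_one])
  · exact center
  · exact vertex (n / 2 + 1) (by omega) (by omega)
      (by rw [fv_half_add le_rfl, fval_one]; omega)
  · exact midpoint ((2 * n + 3 - m) / 2) (by omega) (by omega)
      (by rw [fm_eq_of_lt_half (by omega) (by omega)]; omega)
  · exact midpoint (n / 2 + 1) (by omega) (by omega) (fm_half_add_one (by omega))
  · exact vertex 2 (by norm_num) (by omega) (by rw [fv_of_le_half (by omega), fval_two])

theorem of_even (hev : n % 2 = 0) (hn : 8 ≤ n) (hm : m % 2 = 0) (hm0 : 1 ≤ m)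
    (hm' : m ≤ 2 * n + 1) : IsLabel n m := by
  have hfm_half := fm_half (n := n) (by omega)
  have hfm_self := fm_self hev (by omega)
  obtain hlow | hmid | hlow' | rfl | rfl | hhigh | hmid' | hhigh' :
      m + 1 ≤ n / 2 ∨ (n / 2 ≤ m ∧ m ≤ n / 2 + 1) ∨ (n / 2 + 2 ≤ m ∧ m ≤ n - 2) ∨ m = n ∨
      m = n + 2 ∨ (n + 4 ≤ m ∧ m ≤ n + n / 2) ∨ (n + n / 2 + 1 ≤ m ∧ m ≤ n + n / 2 + 2) ∨
      2 * n + 3 - n / 2 ≤ m := by omega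
  · exact vertex (m + 1) (by omega) (by omega)
      (by rw [fv_of_le_half (by omega), fval_of_odd (by omega) (by omega)]; omega)
  · rcases Nat.mod_two_eq_zero_or_one (n / 2) with hh | hh
    · exact midpoint (n / 2) (by omega) (by omega)
        (by rw [hfm_half, fval_of_even hh (by omega)]; omega)
    · exact midpoint n (by omega) le_rfl (by rw [hfm_self, fval_of_odd hh (by omega)]; omega)
  · exact vertex (n / 2 + (n + 2 - m)) (by omega) (by omega)
      (by rw [fv_half_add (by omega), fval_of_even (by omega) (by omega)]; omega)
  · exact midpoint 2 (by norm_num) (by omega) (fm_two (by omega))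
  · exact midpoint (n / 2 + 2) (by omega) (by omega) (fm_half_add_two (by omega))
  · exact vertex (m - n) (by omega) (by omega)
      (by rw [fv_of_le_half (by omega), fval_of_even (by omega) (by omega)]; omega)
  · rcases Nat.mod_two_eq_zero_or_one (n / 2) with hh | hh
    · exact midpoint n (by omega) le_rfl (by rw [hfm_self, fval_of_even hh (by omega)]; omega)
    · exact midpoint (n / 2) (by omega) (by omega)
        (by rw [hfm_half, fval_of_odd hh (by omega)]; omega)
  · exact vertex (n / 2 + (2 * n + 3 - m)) (by omega) (by omega)
      (by rw [fv_half_add (by omega), fval_of_odd (by omega) (by omega)]; omega)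

theorem of_mem_Icc (hev : n % 2 = 0) (hn : 8 ≤ n) (hm : m ∈ Icc 1 (2 * n + 1)) :
    IsLabel n m := by
  obtain ⟨hm1, hm2⟩ := mem_Icc.mp hm
  rcases Nat.mod_two_eq_zero_or_one m with hpar | hpar
  · exact of_even hev hn hpar hm1 hm2
  · exact of_odd hev hn hpar hm2

end IsLabel

theorem fstar_bijective (n : ℕ) (hev : n % 2 = 0) (hn : 8 ≤ n) :
    let F : Fin n ⊕ Fin n ⊕ Unit → ℕ :=
      Sum.elim (fun i => fv n (i.1 + 1))
        (Sum.elim (fun i => fm n (i.1 + 1)) (fun _ => n + 1))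
    Function.Injective F ∧ Set.range F = ↑(Finset.Icc 1 (2 * n + 1)) := by
  intro F
  have hcard : #(Icc 1 (2 * n + 1)) = Fintype.card (Fin n ⊕ Fin n ⊕ Unit) := by
    simp only [Nat.card_Icc, Fintype.card_sum, Fintype.card_fin, Fintype.card_unit]
    omega
  refine Function.injective_and_range_eq_of_subset_range hcard fun m hm => ?_
  obtain rfl | ⟨i, hi1, hin, hvertex | hmidpoint⟩ := IsLabel.of_mem_Icc hev hn (mem_coe.mp hm)
  · exact ⟨.inr (.inr ()), rfl⟩
  · exact ⟨.inl ⟨i - 1, by omega⟩, show fv n (i - 1 + 1) = _ by rwa [Nat.sub_add_cancel hi1]⟩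
  · exact ⟨.inr (.inl ⟨i - 1, by omega⟩),
      show fm n (i - 1 + 1) = _ by rwa [Nat.sub_add_cancel hi1]⟩
end
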